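/- arXiv:1206.0633 — 5 statements merged into one kernel-verified Lean document; each statement's English description precedes it below -/
import Mathlib

section
/- The sequence (x_w)_{w≥1} is a probability distribution, i.e. Σ_{w=1}^∞ x_w = 1. -/
/-!
With `t n = (α (n + 1) + β) x (n + 1)` the recurrence reads `t n - t (n + 1) = x (n + 2)`, and
`t 0 = 1 - x 1`, so the series telescopes to `1 - lim t`. The sequence `t` is positive and
decreasing, with limit `L` say; then `x (n + 2) = t (n + 1) / (α (n + 2) + β) ≥ L / (α (n + 2) + β)`,
and since the series of `x` converges while `∑ 1 / (α n + β)` diverges, `L = 0`.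
-/

open Filter Topology Finset

theorem Antitone.hasSum_sub_succ {t : ℕ → ℝ} {l : ℝ} (ht : Antitone t)
    (hl : Tendsto t atTop (𝓝 l)) : HasSum (fun n => t n - t (n + 1)) (t 0 - l) := by
  rw [hasSum_iff_tendsto_nat_of_nonneg (fun n => sub_nonneg.2 (ht n.le_succ))]
  simp only [sum_range_sub']
  exact hl.const_sub _

theorem Real.not_summable_inv_mul_add {a b : ℝ} (ha : 0 ≤ a) (hb : 0 < b) :
    ¬Summable fun n : ℕ => (a * n + b)⁻¹ := by
  intro h
  have hharm : Summable fun n : ℕ => ((n : ℝ) + 1)⁻¹ := by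
    refine (h.mul_left (a + b)).of_nonneg_of_le (fun n => by positivity) fun n => ?_
    rw [← div_eq_mul_inv, le_div_iff₀ (by positivity), ← div_eq_inv_mul,
      div_le_iff₀ (by positivity)]
    nlinarith [(n.cast_nonneg : (0 : ℝ) ≤ n)]
  exact Real.not_summable_natCast_inv <| (summable_nat_add_iff 1).1 <| by exact_mod_cast hharm

theorem tendsto_zero_of_mul_le_sub_succ {t g : ℕ → ℝ} (ht : ∀ n, 0 ≤ t n) (hg : ∀ n, 0 ≤ g n)
    (hg_div : ¬Summable g) (hdec : ∀ n, g n * t (n + 1) ≤ t n - t (n + 1)) :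
    Tendsto t atTop (𝓝 0) := by
  have hanti : Antitone t :=
    antitone_nat_of_succ_le fun n => sub_nonneg.1 ((mul_nonneg (hg n) (ht _)).trans (hdec n))
  have hL := tendsto_atTop_ciInf hanti ⟨0, by rintro _ ⟨n, rfl⟩; exact ht n⟩
  set L := ⨅ n, t n
  have hsumm : Summable fun n => g n * L :=
    (hanti.hasSum_sub_succ hL).summable.of_nonneg_of_le
      (fun n => mul_nonneg (hg n) (ge_of_tendsto' hL ht))
      fun n => (mul_le_mul_of_nonneg_left (hanti.le_of_tendsto hL _) (hg n)).trans (hdec n)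
  by_cases hL0 : L = 0
  · rwa [hL0] at hL
  · exact absurd ((summable_mul_right_iff hL0).1 hsumm) hg_div

/-- The asymptotic weight distribution `(x_w)_{w ≥ 1}` is a probability distribution:
`∑_{w=1}^∞ x_w = 1`. -/
theorem stmt_0 (α₁ α₂ β : ℝ) (hα₁ : 0 < α₁) (hα₂ : 0 < α₂) (hβ : 0 < β)
    (α : ℝ) (hα : α = α₁ + α₂)
    (x : ℕ → ℝ) (hx1 : x 1 = 1 / (α + β + 1))
    (hxrec : ∀ w : ℕ, 2 ≤ w →
      x w = (α * (w - 1) + β) / (α * w + β + 1) * x (w - 1)) :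
    HasSum (fun w : ℕ => x (w + 1)) 1 := by
  have hα0 : 0 ≤ α := by rw [hα]; positivity
  have hrec (n : ℕ) :
      x (n + 2) = (α * (n + 1) + β) / (α * (n + 2) + β + 1) * x (n + 1) := by
    rw [hxrec (n + 2) (by omega), Nat.add_sub_assoc one_le_two]
    push_cast
    ring
  have hpos (n : ℕ) : 0 < x (n + 1) := by
    induction n with
    | zero => rw [hx1]; positivity
    | succ n ih => rw [hrec]; positivity
  set t : ℕ → ℝ := fun n => (α * (n + 1) + β) * x (n + 1) with ht
  have hdec (n : ℕ) : t n - t (n + 1) = x (n + 2) := by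
    simp only [ht, hrec n]
    field_simp
    push_cast
    ring
  have hlim : Tendsto t atTop (𝓝 0) := by
    refine tendsto_zero_of_mul_le_sub_succ (fun n => (mul_pos (by positivity) (hpos n)).le)
      (fun n => by positivity)
      (Real.not_summable_inv_mul_add (b := 2 * α + β) hα0 (by positivity)) fun n => ?_
    rw [hdec, ht]
    push_cast
    rw [show α * ((n : ℝ) + 1 + 1) + β = α * n + (2 * α + β) by ring]
    exact (inv_mul_cancel_left₀ (by positivity) _).le
  have hanti : Antitone t := antitone_nat_of_succ_le fun n => by linarith [hdec n, hpos (n + 1)]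
  have htel := hanti.hasSum_sub_succ hlim
  have ht0 : t 0 = 1 - x 1 := by
    simp only [ht, Nat.cast_zero, zero_add, hx1]
    field_simp
    ring
  simp only [hdec, ht0, sub_zero] at htel
  exact (hasSum_nat_add_iff' 1).1 (by simpa using htel)
end

section
/- For all integers w ≥ 1 and 2 ≤ d ≤ 2w, x_{d,w} equals 1/c_w times the coefficient of z^{d−2} in the real polynomial ∏_{i=1}^{w−1} ( i·(α₁ + α₂·z) + β·z² ). -/
/-!
Multiplying the recursion by `c_w = c_{w-1} (α w + β + 1)` turns it into
`c_w x_{d,w} = α₁ (w-1) c_{w-1} x_{d,w-1} + α₂ (w-1) c_{w-1} x_{d-1,w-1} + β c_{w-1} x_{d-2,w-1}`,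
which is exactly how the coefficients of a polynomial change under multiplication by
`(w-1)(α₁ + α₂ z) + β z²`. Indexing coefficients by all of `ℤ` (zero below degree `0`) absorbs
the vanishing of `x_{d,w}` for `d < 2` into the same induction.
-/

open Polynomial Finset

namespace Polynomial

variable {R : Type*} [Semiring R]

def coeffInt (p : R[X]) (k : ℤ) : R :=
  if 0 ≤ k then p.coeff k.toNat else 0

theorem coeffInt_of_nonneg (p : R[X]) {k : ℤ} (hk : 0 ≤ k) : p.coeffInt k = p.coeff k.toNat := by
  simp [coeffInt, hk]

theorem coeffInt_one (k : ℤ) : (1 : R[X]).coeffInt k = if k = 0 then 1 else 0 := by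
  unfold coeffInt
  split_ifs with hk hk0
  · simp [hk0]
  · rw [coeff_one, if_neg (by omega)]
  · omega
  · rfl

@[simp]
theorem coeffInt_add (p q : R[X]) (k : ℤ) : (p + q).coeffInt k = p.coeffInt k + q.coeffInt k := by
  unfold coeffInt
  split_ifs <;> simp

@[simp]
theorem coeffInt_C_mul (a : R) (p : R[X]) (k : ℤ) : (C a * p).coeffInt k = a * p.coeffInt k := by
  unfold coeffInt
  split_ifs <;> simp

@[simp]
theorem coeffInt_mul_X_pow (p : R[X]) (n : ℕ) (k : ℤ) :
    (p * X ^ n).coeffInt k = p.coeffInt (k - n) := by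
  unfold coeffInt
  rw [coeff_mul_X_pow']
  split_ifs <;> first | rfl | omega | congr 1; omega

end Polynomial

section Recursion

variable {K : Type*} [Field K] (α₁ α₂ β : K)

theorem coeffInt_mul_factor (p : K[X]) (i : ℕ) (k : ℤ) :
    (p * ((i : K[X]) * (C α₁ + C α₂ * X) + C β * X ^ 2)).coeffInt k =
      α₁ * i * p.coeffInt k + α₂ * i * p.coeffInt (k - 1) + β * p.coeffInt (k - 2) := by
  have hsplit : p * ((i : K[X]) * (C α₁ + C α₂ * X) + C β * X ^ 2) =
      C (α₁ * i) * p + C (α₂ * i) * (p * X ^ 1) + C β * (p * X ^ 2) := by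
    rw [← C_eq_natCast, C_mul, C_mul]
    ring
  rw [hsplit]
  simp only [coeffInt_add, coeffInt_C_mul, coeffInt_mul_X_pow]
  push_cast
  ring

theorem eq_inv_prod_mul_coeffInt (α : K) (x : ℤ → ℕ → K)
    (hbase : x 2 1 = 1 / (α + β + 1))
    (hbase' : ∀ d : ℤ, d ≠ 2 → x d 1 = 0)
    (hrec : ∀ (d : ℤ) (w : ℕ), 2 ≤ w →
      x d w = (1 / (α * w + β + 1)) *
        (α₁ * (w - 1) * x d (w - 1) + α₂ * (w - 1) * x (d - 1) (w - 1)
          + β * x (d - 2) (w - 1)))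
    (m : ℕ) (d : ℤ) :
    x d (m + 1) = (∏ j ∈ Icc 1 (m + 1), (α * j + β + 1))⁻¹ *
      (∏ i ∈ Icc 1 m, ((i : K[X]) * (C α₁ + C α₂ * X) + C β * X ^ 2)).coeffInt (d - 2) := by
  induction m generalizing d with
  | zero =>
    by_cases hd : d = 2
    · simp [hd, hbase, coeffInt_one]
    · simp [hbase' d hd, coeffInt_one, sub_eq_zero, hd]
  | succ m ih =>
    rw [hrec d (m + 1 + 1) (by omega), Nat.add_sub_cancel, ih, ih, ih,
      prod_Icc_succ_top (M := K) (by omega : 1 ≤ m + 1 + 1),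
      prod_Icc_succ_top (M := K[X]) (by omega : 1 ≤ m + 1), coeffInt_mul_factor,
      sub_right_comm d 1 2, mul_inv]
    push_cast
    ring

end Recursion

theorem stmt_4_general (α₁ α₂ β : ℝ)
    (α : ℝ)
    (x : ℤ → ℕ → ℝ)
    (hbase : x 2 1 = 1 / (α + β + 1))
    (hbase' : ∀ d : ℤ, d ≠ 2 → x d 1 = 0)
    (hrec : ∀ (d : ℤ) (w : ℕ), 2 ≤ w →
      x d w = (1 / (α * w + β + 1)) *
        (α₁ * (w - 1) * x d (w - 1) + α₂ * (w - 1) * x (d - 1) (w - 1)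
          + β * x (d - 2) (w - 1)))
    (c : ℕ → ℝ)
    (hc : ∀ w : ℕ, c w = ∏ j ∈ Finset.Icc 1 w, (α * j + β + 1)) :
    ∀ (w : ℕ), 1 ≤ w → ∀ (d : ℤ), 2 ≤ d → d ≤ 2 * (w : ℤ) →
      x d w = (1 / c w) *
        (∏ i ∈ Finset.Icc 1 (w - 1),
          ((i : ℝ[X]) * (Polynomial.C α₁ + Polynomial.C α₂ * Polynomial.X)
            + Polynomial.C β * Polynomial.X ^ 2)).coeff (d - 2).toNat := by
  intro w hw d hd _
  obtain ⟨m, rfl⟩ : ∃ m, w = m + 1 := ⟨w - 1, by omega⟩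
  rw [eq_inv_prod_mul_coeffInt α₁ α₂ β α x hbase hbase' hrec, hc, one_div, Nat.add_sub_cancel,
    coeffInt_of_nonneg _ (by omega)]

/-- Generating-function form of the explicit solution: `x_{d,w}` equals `1/c_w` times
the coefficient of `z^{d-2}` in `∏_{i=1}^{w-1} ( i(α₁ + α₂ z) + β z² )`. -/
theorem stmt_4 (α₁ α₂ β : ℝ) (hα₁ : 0 < α₁) (hα₂ : 0 < α₂) (hβ : 0 < β)
    (α : ℝ) (hα : α = α₁ + α₂)
    (x : ℤ → ℕ → ℝ)
    (hbase : x 2 1 = 1 / (α + β + 1))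
    (hbase' : ∀ d : ℤ, d ≠ 2 → x d 1 = 0)
    (hrec : ∀ (d : ℤ) (w : ℕ), 2 ≤ w →
      x d w = (1 / (α * w + β + 1)) *
        (α₁ * (w - 1) * x d (w - 1) + α₂ * (w - 1) * x (d - 1) (w - 1)
          + β * x (d - 2) (w - 1)))
    (c : ℕ → ℝ)
    (hc : ∀ w : ℕ, c w = ∏ j ∈ Finset.Icc 1 w, (α * j + β + 1)) :
    ∀ (w : ℕ), 1 ≤ w → ∀ (d : ℤ), 2 ≤ d → d ≤ 2 * (w : ℤ) →
      x d w = (1 / c w) *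
        (∏ i ∈ Finset.Icc 1 (w - 1),
          ((i : ℝ[X]) * (Polynomial.C α₁ + Polynomial.C α₂ * Polynomial.X)
            + Polynomial.C β * Polynomial.X ^ 2)).coeff (d - 2).toNat :=
  stmt_4_general α₁ α₂ β α x hbase hbase' hrec c hc
end

section
/- For all integers w ≥ 1 and 2 ≤ d ≤ 2w, P(S_W = d and W = w) = x_{d,w}, where S_W denotes the random variable ω ↦ S_{W(ω)}(ω). -/
open MeasureTheory ProbabilityTheory Finset

/-!
`S_w` is a function of `ξ₁, …, ξ_w` and `ξ₁` is a.s. constant, so `S_w` is independent of `W`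
and of `ξ_{w+1}`. Hence `P(S_W = d, W = w) = P(S_w = d) x_w`, and the law of `S_w` obeys the
convolution recursion `P(S_w = d) = ∑ₖ P(S_{w-1} = d - k) P(ξ_w = k)`. Multiplying by `x_w`, the
factor `α(w-1)+β` of `x_w / x_{w-1}` cancels the denominator of the law of `ξ_w`, and the recursion
becomes the one defining `x_{d,w}`; induction on `w` gives `P(S_w = d) x_w = x_{d,w}`.
-/

lemma sum_Icc_one_eq_add_sum_Ico {M : Type*} [AddCommMonoid M] (ξ : ℕ → M) {w : ℕ}
    (hw : 1 ≤ w) : ∑ i ∈ Icc 1 w, ξ i = ξ 1 + ∑ i ∈ Ico 1 w, ξ (i + 1) := by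
  rw [← Ico_add_one_right_eq_Icc, sum_eq_sum_Ico_succ_bot (by omega), sum_Ico_add']

namespace ProbabilityTheory

variable {Ω G : Type*} [MeasurableSpace Ω] {μ : Measure Ω}

lemma measureReal_eq_ite_of_ae_eq [DecidableEq G] [IsProbabilityMeasure μ] {X : Ω → G} {c : G}
    (hX : ∀ᵐ ω ∂μ, X ω = c) (e : G) :
    μ.real {ω | X ω = e} = if e = c then 1 else 0 := by
  have hconst : {ω | X ω = e} =ᵐ[μ] {_ω | e = c} := by
    rw [Filter.eventuallyEq_set]
    filter_upwards [hX] with ω h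
    rw [h, eq_comm]
  rw [measureReal_congr hconst]
  split_ifs with he <;> simp [he]

variable [MeasurableSpace G] [MeasurableSingletonClass G]

lemma IndepFun.measureReal_eq_and_eq {β : Type*} [MeasurableSpace β]
    [MeasurableSingletonClass β] {X : Ω → G} {Y : Ω → β} (hXY : IndepFun X Y μ) (a : G) (b : β) :
    μ.real {ω | X ω = a ∧ Y ω = b} = μ.real {ω | X ω = a} * μ.real {ω | Y ω = b} := by
  simp only [measureReal_def, ← ENNReal.toReal_mul]
  exact congrArg ENNReal.toReal (hXY.measure_inter_preimage_eq_mul _ _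
    (measurableSet_singleton a) (measurableSet_singleton b))

lemma ae_mem_of_sum_measureReal_eq_one [IsProbabilityMeasure μ] {Y : Ω → G}
    (hY : Measurable Y) {s : Finset G} (h : ∑ k ∈ s, μ.real {ω | Y ω = k} = 1) :
    ∀ᵐ ω ∂μ, Y ω ∈ s := by
  have hunion : μ.real {ω | Y ω ∈ s} = 1 := by
    rw [← h, ← measureReal_biUnion_finset (f := fun k => {ω | Y ω = k})
      (fun k _ l _ hkl => Set.disjoint_left.2 fun _ hk hl => hkl (hk.symm.trans hl))
      fun k _ => hY (measurableSet_singleton k)]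
    congr 1
    ext ω
    simp
  rw [ae_iff_measure_eq (p := fun ω => Y ω ∈ s) (hY s.measurableSet).nullMeasurableSet,
    measure_univ]
  rwa [measureReal_def, ENNReal.toReal_eq_one_iff] at hunion

lemma IndepFun.measureReal_add_eq_sum [AddGroup G] [IsFiniteMeasure μ]
    {X Y : Ω → G} (hXY : IndepFun X Y μ) (hX : Measurable X) (hY : Measurable Y) {s : Finset G}
    (hs : ∀ᵐ ω ∂μ, Y ω ∈ s) (d : G) :
    μ.real {ω | X ω + Y ω = d} =
      ∑ k ∈ s, μ.real {ω | X ω = d - k} * μ.real {ω | Y ω = k} := by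
  have hsplit : {ω | X ω + Y ω = d} =ᵐ[μ] ⋃ k ∈ s, {ω | X ω = d - k ∧ Y ω = k} := by
    rw [Filter.eventuallyEq_set]
    filter_upwards [hs] with ω hω
    simp only [Set.mem_iUnion, Set.mem_ofPred_eq, exists_prop]
    exact ⟨fun h => ⟨Y ω, hω, eq_sub_of_add_eq h, rfl⟩,
      fun ⟨k, _, hX, hY⟩ => by rw [hX, hY, sub_add_cancel]⟩
  rw [measureReal_congr hsplit,
    measureReal_biUnion_finset (f := fun k => {ω | X ω = d - k ∧ Y ω = k})
    (fun k _ l _ hkl => Set.disjoint_left.2 fun _ hk hl => hkl (hk.2.symm.trans hl.2))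
    fun k _ => (hX (measurableSet_singleton _)).inter (hY (measurableSet_singleton _))]
  exact sum_congr rfl fun k _ => hXY.measureReal_eq_and_eq _ _

lemma IndepFun.measureReal_natCast_add_eq [IsProbabilityMeasure μ]
    {X Y : Ω → ℕ} (hXY : IndepFun X Y μ) (hX : Measurable X) (hY : Measurable Y)
    (hY3 : μ.real {ω | Y ω = 0} + μ.real {ω | Y ω = 1} + μ.real {ω | Y ω = 2} = 1) (d : ℤ) :
    μ.real {ω | ((X ω + Y ω : ℕ) : ℤ) = d} =
      μ.real {ω | (X ω : ℤ) = d} * μ.real {ω | Y ω = 0} +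
      μ.real {ω | (X ω : ℤ) = d - 1} * μ.real {ω | Y ω = 1} +
      μ.real {ω | (X ω : ℤ) = d - 2} * μ.real {ω | Y ω = 2} := by
  have hY3' : ∀ᵐ ω ∂μ, Y ω ∈ range 3 :=
    ae_mem_of_sum_measureReal_eq_one hY (by simpa [sum_range_succ] using hY3)
  have hcast : Measurable (fun n : ℕ => (n : ℤ)) := measurable_from_top
  have hY3ℤ : ∀ᵐ ω ∂μ, (Y ω : ℤ) ∈ (range 3).map Nat.castEmbedding := by
    filter_upwards [hY3'] with ω hω
    exact mem_map_of_mem _ hω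
  rw [show {ω | ((X ω + Y ω : ℕ) : ℤ) = d} = {ω | (X ω : ℤ) + (Y ω : ℤ) = d} by simp,
    IndepFun.measureReal_add_eq_sum (X := fun ω => (X ω : ℤ)) (Y := fun ω => (Y ω : ℤ))
      (hXY.comp hcast hcast) (hcast.comp hX) (hcast.comp hY) hY3ℤ]
  simp [sum_range_succ]

lemma iIndepFun.indepFun_sum_Icc {M : Type*} [AddCommMonoid M] [MeasurableSpace M]
    [MeasurableAdd₂ M] {ξ f : ℕ → Ω → M}
    (hf : iIndepFun f μ) (hfm : ∀ i, Measurable (f i)) {c : M} (hξ1 : ∀ᵐ ω ∂μ, ξ 1 ω = c)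
    (hξf : ∀ i, 1 ≤ i → ξ (i + 1) = f i) {w j : ℕ} (hw : 1 ≤ w) (hj : j ∉ Ico 1 w) :
    IndepFun (fun ω => ∑ i ∈ Icc 1 w, ξ i ω) (f j) μ := by
  refine ((hf.indepFun_finsetSum_of_notMem hfm hj).comp (measurable_const_add c)
    measurable_id).congr ?_ .rfl
  filter_upwards [hξ1] with ω h1
  rw [sum_Icc_one_eq_add_sum_Ico _ hw, h1]
  simp only [Function.comp_apply, Finset.sum_apply]
  exact congrArg (c + ·) (sum_congr rfl fun i hi => by rw [hξf i (mem_Ico.1 hi).1])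

end ProbabilityTheory

lemma mul_eq_of_recursions {α₁ α₂ β α : ℝ} {x : ℕ → ℝ} {x2 : ℤ → ℕ → ℝ} {q : ℕ → ℤ → ℝ}
    (hden : ∀ w : ℕ, 1 ≤ w → α * w + β ≠ 0)
    (hxrec : ∀ w : ℕ, 2 ≤ w → x w = (α * (w - 1) + β) / (α * w + β + 1) * x (w - 1))
    (hrec : ∀ (d : ℤ) (w : ℕ), 2 ≤ w →
      x2 d w = (1 / (α * w + β + 1)) *
        (α₁ * (w - 1) * x2 d (w - 1) + α₂ * (w - 1) * x2 (d - 1) (w - 1)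
          + β * x2 (d - 2) (w - 1)))
    (hbase : x2 2 1 = x 1) (hbase' : ∀ d : ℤ, d ≠ 2 → x2 d 1 = 0)
    (hq1 : ∀ d, q 1 d = if d = 2 then 1 else 0)
    (hqrec : ∀ w : ℕ, 2 ≤ w → ∀ d, q w d =
      q (w - 1) d * (α₁ * (w - 1) / (α * (w - 1) + β)) +
      q (w - 1) (d - 1) * (α₂ * (w - 1) / (α * (w - 1) + β)) +
      q (w - 1) (d - 2) * (β / (α * (w - 1) + β))) :
    ∀ w, 1 ≤ w → ∀ d, q w d * x w = x2 d w := by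
  intro w hw
  induction w, hw using Nat.le_induction with
  | base =>
    intro d
    by_cases hd : d = 2
    · simp [hq1, hd, hbase]
    · simp [hq1, hd, hbase' d hd]
  | succ w hw ih =>
    intro d
    have hD := hden w hw
    rw [hqrec _ (by omega), hxrec _ (by omega), hrec _ _ (by omega)]
    simp only [Nat.add_sub_cancel, Nat.cast_add, Nat.cast_one, add_sub_cancel_right,
      ← ih d, ← ih (d - 1), ← ih (d - 2)]
    field_simp
    rw [mul_assoc, mul_div_mul_left _ _ (by rwa [mul_comm])]

lemma measureReal_partialSum_mul_eq {Ω : Type*} [MeasurableSpace Ω] {μ : Measure Ω}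
    [IsProbabilityMeasure μ] {α₁ α₂ β α : ℝ} (hα : α = α₁ + α₂)
    (hden : ∀ w : ℕ, 1 ≤ w → α * w + β ≠ 0) {x : ℕ → ℝ} {x2 : ℤ → ℕ → ℝ}
    (hxrec : ∀ w : ℕ, 2 ≤ w → x w = (α * (w - 1) + β) / (α * w + β + 1) * x (w - 1))
    (hrec : ∀ (d : ℤ) (w : ℕ), 2 ≤ w →
      x2 d w = (1 / (α * w + β + 1)) *
        (α₁ * (w - 1) * x2 d (w - 1) + α₂ * (w - 1) * x2 (d - 1) (w - 1)
          + β * x2 (d - 2) (w - 1)))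
    (hbase : x2 2 1 = x 1) (hbase' : ∀ d : ℤ, d ≠ 2 → x2 d 1 = 0)
    {ξ S : ℕ → Ω → ℕ} (hξm : ∀ i, Measurable (ξ i)) (hξ1 : ∀ᵐ ω ∂μ, ξ 1 ω = 2)
    (hξ : ∀ w : ℕ, 2 ≤ w →
      μ.real {ω | ξ w ω = 0} = α₁ * (w - 1) / (α * (w - 1) + β) ∧
      μ.real {ω | ξ w ω = 1} = α₂ * (w - 1) / (α * (w - 1) + β) ∧
      μ.real {ω | ξ w ω = 2} = β / (α * (w - 1) + β))
    (hS : ∀ w ω, S w ω = ∑ i ∈ Icc 1 w, ξ i ω)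
    (hind : ∀ w, 1 ≤ w → IndepFun (S w) (ξ (w + 1)) μ) :
    ∀ w, 1 ≤ w → ∀ d : ℤ, μ.real {ω | (S w ω : ℤ) = d} * x w = x2 d w := by
  refine mul_eq_of_recursions (q := fun w d => μ.real {ω | (S w ω : ℤ) = d}) hden hxrec hrec
    hbase hbase' (measureReal_eq_ite_of_ae_eq (X := fun ω => (S 1 ω : ℤ))
      (by filter_upwards [hξ1] with ω h; simp [hS, h])) fun w hw d => ?_
  obtain ⟨u, rfl⟩ : ∃ u, w = u + 1 := ⟨w - 1, by omega⟩
  obtain ⟨p0, p1, p2⟩ := hξ (u + 1) hw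
  have hadd : ∀ ω, S (u + 1) ω = S u ω + ξ (u + 1) ω := fun ω => by
    rw [hS, hS, sum_Icc_succ_top (by omega)]
  have hSm : Measurable (S u) := by
    rw [show S u = _ from funext (hS u)]
    exact Finset.measurable_sum _ fun i _ => hξm i
  have hsum : μ.real {ω | ξ (u + 1) ω = 0} + μ.real {ω | ξ (u + 1) ω = 1} +
      μ.real {ω | ξ (u + 1) ω = 2} = 1 := by
    rw [p0, p1, p2, ← add_div, ← add_div,
      div_eq_one_iff_eq (by push_cast; simpa using hden u (by omega)), hα]
    ring
  simp only [hadd, Nat.add_sub_cancel]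
  rw [(hind u (by omega)).measureReal_natCast_add_eq hSm (hξm _) hsum, p0, p1, p2]

/-- Construction of the two-dimensional limit distribution:
`P(S_W = d, W = w) = x_{d,w}` for `w ≥ 1`, `2 ≤ d ≤ 2w`. -/
theorem stmt_5 (α₁ α₂ β : ℝ) (hα₁ : 0 < α₁) (hα₂ : 0 < α₂) (hβ : 0 < β)
    (α : ℝ) (hα : α = α₁ + α₂)
    -- the weight distribution (x_w)
    (x : ℕ → ℝ) (hx1 : x 1 = 1 / (α + β + 1))
    (hxrec : ∀ w : ℕ, 2 ≤ w →
      x w = (α * (w - 1) + β) / (α * w + β + 1) * x (w - 1))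
    -- the joint limits (x_{d,w})
    (x2 : ℤ → ℕ → ℝ)
    (hbase : x2 2 1 = 1 / (α + β + 1))
    (hbase' : ∀ d : ℤ, d ≠ 2 → x2 d 1 = 0)
    (hrec : ∀ (d : ℤ) (w : ℕ), 2 ≤ w →
      x2 d w = (1 / (α * w + β + 1)) *
        (α₁ * (w - 1) * x2 d (w - 1) + α₂ * (w - 1) * x2 (d - 1) (w - 1)
          + β * x2 (d - 2) (w - 1)))
    -- the probability space and the random variables
    {Ω : Type*} [MeasurableSpace Ω] (μ : Measure Ω) [IsProbabilityMeasure μ]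
    (W : Ω → ℕ) (ξ : ℕ → Ω → ℕ)
    (hWmeas : Measurable W) (hξmeas : ∀ i, Measurable (ξ i))
    (hW : ∀ w : ℕ, 1 ≤ w → (μ {ω | W ω = w}).toReal = x w)
    (hξ1 : ∀ᵐ ω ∂μ, ξ 1 ω = 2)
    (hindep : iIndepFun
      (fun i : ℕ => if i = 0 then W else ξ (i + 1)) μ)
    (hξ : ∀ w : ℕ, 2 ≤ w →
      (μ {ω | ξ w ω = 0}).toReal = α₁ * (w - 1) / (α * (w - 1) + β) ∧
      (μ {ω | ξ w ω = 1}).toReal = α₂ * (w - 1) / (α * (w - 1) + β) ∧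
      (μ {ω | ξ w ω = 2}).toReal = β / (α * (w - 1) + β))
    (S : ℕ → Ω → ℕ)
    (hS : ∀ w ω, S w ω = ∑ i ∈ Finset.Icc 1 w, ξ i ω) :
    ∀ (w : ℕ), 1 ≤ w → ∀ (d : ℤ), 2 ≤ d → d ≤ 2 * (w : ℤ) →
      (μ {ω | (S (W ω) ω : ℤ) = d ∧ W ω = w}).toReal = x2 d w := by
  intro w hw d _ _
  have hden : ∀ v : ℕ, 1 ≤ v → α * v + β ≠ 0 := fun v _ => by rw [hα]; positivity
  set f : ℕ → Ω → ℕ := fun i => if i = 0 then W else ξ (i + 1)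
  have hfm : ∀ i, Measurable (f i) := fun i => by
    by_cases hi : i = 0 <;> simp [f, hi, hWmeas, hξmeas]
  have hSf : ∀ v j, 1 ≤ v → j ∉ Ico 1 v → IndepFun (S v) (f j) μ := fun v j hv hj => by
    rw [show S v = _ from funext (hS v)]
    exact hindep.indepFun_sum_Icc hfm hξ1 (fun i hi => by simp [f, Nat.one_le_iff_ne_zero.1 hi])
      hv hj
  have hSξ : ∀ v, 1 ≤ v → IndepFun (S v) (ξ (v + 1)) μ := fun v hv => by
    simpa [f, Nat.one_le_iff_ne_zero.1 hv] using hSf v v hv (by simp)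
  have hSW : IndepFun (fun ω => (S w ω : ℤ)) W μ :=
    (hSf w 0 hw (by simp)).comp measurable_from_top measurable_id
  calc μ.real {ω | (S (W ω) ω : ℤ) = d ∧ W ω = w}
      = μ.real {ω | (S w ω : ℤ) = d ∧ W ω = w} := by
        congr 1; ext ω; constructor <;> rintro ⟨h, rfl⟩ <;> exact ⟨h, rfl⟩
    _ = μ.real {ω | (S w ω : ℤ) = d} * x w := by
        rw [hSW.measureReal_eq_and_eq]; exact congrArg _ (hW w hw)
    _ = x2 d w := measureReal_partialSum_mul_eq hα hden hxrec hrec (hbase.trans hx1.symm) hbase'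
        hξmeas hξ1 hξ hS hSξ w hw d
end

section
/- The sequence n^{−(γ + δ/p)} · ∏_{i=1}^{n−1} ( 1 − γ/i − δ/v_{i−1} )^{−1} converges, as n → ∞, to a positive real number. -/
/-!
Write the factors as `1 - a_i` with `a_i = γ/i + δ/v_{i-1}` and put `c = γ + δ/p`. Since
`v_{i-1} = p i + o(i^{1/2+ε})`, the defects `a_i - c/i` are `O(i^{ε-3/2})`, hence summable, and
so are the `a_i²`. As `-log (1 - a_i) = a_i + O(a_i²)`, the sum `∑_{i=1}^{n-1} -log (1 - a_i)`
equals `c H_{n-1}` plus a convergent series, and `H_{n-1} - log n → γ_E`. Exponentiating, the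
sequence tends to `exp (S + c γ_E) > 0`, where `S` is the sum of that series.
-/

open Real Filter Asymptotics Topology Finset

theorem Real.log_one_sub_add_self_isBigO :
    (fun x : ℝ => log (1 - x) + x) =O[𝓝 0] fun x => x ^ 2 := by
  refine isBigO_iff.2 ⟨2, ?_⟩
  filter_upwards [Metric.ball_mem_nhds (0 : ℝ) one_half_pos] with x hx
  rw [Metric.mem_ball, dist_zero_right, norm_eq_abs] at hx
  have h := abs_log_sub_add_sum_range_le (hx.trans one_half_lt_one) 1
  rw [sum_range_one, zero_add, pow_one, Nat.cast_zero, zero_add, div_one, add_comm] at h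
  calc ‖log (1 - x) + x‖ ≤ |x| ^ 2 / (1 - |x|) := h
    _ ≤ |x| ^ 2 / (1 / 2) := by gcongr; linarith
    _ = 2 * ‖x ^ 2‖ := by rw [norm_pow, norm_eq_abs]; ring

theorem summable_sq_of_summable_sub_div {a : ℕ → ℝ} (c : ℝ)
    (h : Summable fun i => a i - c / i) : Summable fun i => a i ^ 2 := by
  have hd : Summable fun i => (a i - c / i) ^ 2 := by
    refine summable_of_isBigO_nat h ?_
    simpa only [sq, one_mul] using
      (h.tendsto_atTop_zero.isBigO_one ℝ).mul (isBigO_refl (fun i => a i - c / i) atTop)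
  have hc : Summable fun i : ℕ => (c / i) ^ 2 := by
    simpa only [div_eq_mul_inv, mul_pow, inv_pow] using
      (summable_nat_pow_inv.2 one_lt_two).mul_left (c ^ 2)
  refine ((hc.add hd).mul_left 2).of_nonneg_of_le (fun i => sq_nonneg _) fun i => ?_
  calc a i ^ 2 = (c / i + (a i - c / i)) ^ 2 := by ring
    _ ≤ 2 * ((c / i) ^ 2 + (a i - c / i) ^ 2) := add_sq_le

theorem summable_log_one_sub_add_self {a : ℕ → ℝ} (ha : Tendsto a atTop (𝓝 0))
    (h : Summable fun i => a i ^ 2) : Summable fun i => log (1 - a i) + a i :=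
  summable_of_isBigO_nat h (Real.log_one_sub_add_self_isBigO.comp_tendsto ha)

theorem sum_Icc_one_sub_one_eq_sum_range {M : Type*} [AddCommMonoid M] (f : ℕ → M) (n : ℕ) :
    ∑ i ∈ Icc 1 (n - 1), f i = ∑ k ∈ range (n - 1), f (k + 1) := by
  rw [show Icc 1 (n - 1) = Ico 1 n by ext; simp only [mem_Icc, mem_Ico]; omega,
    sum_Ico_eq_sum_range]
  simp only [add_comm]

theorem Summable.tendsto_sum_Icc_one_sub_one {f : ℕ → ℝ} (hf : Summable f) :
    Tendsto (fun n => ∑ i ∈ Icc 1 (n - 1), f i) atTop (𝓝 (∑' k, f (k + 1))) := by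
  simp_rw [sum_Icc_one_sub_one_eq_sum_range]
  exact ((summable_nat_add_iff 1).2 hf).hasSum.tendsto_sum_nat.comp (tendsto_sub_atTop_nat 1)

theorem tendsto_sum_Icc_inv_sub_log :
    Tendsto (fun n : ℕ => ∑ i ∈ Icc 1 (n - 1), (i : ℝ)⁻¹ - log n) atTop
      (𝓝 eulerMascheroniConstant) := by
  refine (tendsto_harmonic_sub_log_add_one.comp (tendsto_sub_atTop_nat 1)).congr' ?_
  filter_upwards [eventually_ge_atTop 1] with n hn
  simp [sum_Icc_one_sub_one_eq_sum_range, harmonic, Nat.cast_sub hn]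

theorem exists_pos_tendsto_rpow_neg_mul_prod_inv {a : ℕ → ℝ} {c : ℝ}
    (hpos : ∀ i, 1 ≤ i → 0 < 1 - a i) (hsum : Summable fun i => a i - c / i) :
    ∃ L, 0 < L ∧ Tendsto
      (fun n : ℕ => (n : ℝ) ^ (-c) * (∏ i ∈ Icc 1 (n - 1), (1 - a i))⁻¹) atTop (𝓝 L) := by
  have ha : Tendsto a atTop (𝓝 0) := by
    simpa using (tendsto_const_div_atTop_nhds_zero_nat c).add hsum.tendsto_atTop_zero
  set b : ℕ → ℝ := fun i => -log (1 - a i) - c / i with hb_def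
  have hb : Summable b :=
    ((summable_log_one_sub_add_self ha (summable_sq_of_summable_sub_div c hsum)).neg.add
      hsum).congr fun i => by simp only [hb_def]; ring
  refine ⟨exp (∑' k, b (k + 1) + c * eulerMascheroniConstant), exp_pos _, ?_⟩
  refine ((hb.tendsto_sum_Icc_one_sub_one.add
    (tendsto_sum_Icc_inv_sub_log.const_mul c)).rexp).congr' ?_
  filter_upwards [eventually_ge_atTop 1] with n hn
  have hprod :
      exp (∑ i ∈ Icc 1 (n - 1), log (1 - a i)) = ∏ i ∈ Icc 1 (n - 1), (1 - a i) := by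
    rw [exp_sum]
    exact prod_congr rfl fun i hi => exp_log (hpos i (mem_Icc.1 hi).1)
  have hsum_b : ∑ i ∈ Icc 1 (n - 1), b i
      = -∑ i ∈ Icc 1 (n - 1), log (1 - a i)
        - c * ∑ i ∈ Icc 1 (n - 1), (i : ℝ)⁻¹ := by
    simp only [hb_def, sum_sub_distrib, sum_neg_distrib, mul_sum, div_eq_mul_inv]
  rw [rpow_def_of_pos (by positivity), hsum_b, ← hprod, ← exp_neg, ← exp_add]
  congr 1
  ring

theorem isEquivalent_const_mul_natCast_of_isLittleO_rpow {p r : ℝ} {v : ℕ → ℝ} (hp : p ≠ 0)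
    (hr : r ≤ 1) (hv : (fun j => v j - p * j) =o[atTop] fun j : ℕ => (j : ℝ) ^ r) :
    v ~[atTop] fun j : ℕ => p * j := by
  have hrpow_le : (fun j : ℕ => (j : ℝ) ^ r) =O[atTop] fun j : ℕ => (j : ℝ) := by
    refine IsBigO.of_bound 1 ?_
    filter_upwards [eventually_ge_atTop 1] with j hj
    rw [one_mul, norm_of_nonneg (by positivity), norm_of_nonneg (by positivity)]
    exact rpow_le_self_of_one_le (by exact_mod_cast hj) hr
  exact hv.trans_isBigO (hrpow_le.trans (isBigO_self_const_mul hp _ _))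

theorem summable_inv_sub_inv_of_isLittleO {p r : ℝ} {v : ℕ → ℝ} (hp : 0 < p) (hr₀ : 0 ≤ r)
    (hr₁ : r < 1) (hv : (fun j => v j - p * j) =o[atTop] fun j : ℕ => (j : ℝ) ^ r) :
    Summable fun j : ℕ => (v j)⁻¹ - (p * (j + 1))⁻¹ := by
  have h_one_le : ∀ᶠ j : ℕ in atTop, 1 ≤ (j : ℝ) := by
    filter_upwards [eventually_ge_atTop 1] with j hj
    exact_mod_cast hj
  have hequiv := isEquivalent_const_mul_natCast_of_isLittleO_rpow hp.ne' hr₁.le hv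
  have hv_pos : ∀ᶠ j in atTop, 0 < v j :=
    (hequiv.symm.tendsto_atTop
      (tendsto_natCast_atTop_atTop.const_mul_atTop hp)).eventually_gt_atTop 0
  have hnum : (fun j : ℕ => p * (j + 1) - v j) =O[atTop] fun j : ℕ => (j : ℝ) ^ r := by
    have hconst : (fun _ : ℕ => p) =O[atTop] fun j : ℕ => (j : ℝ) ^ r := by
      refine (isBigO_const_left_iff_pos_le_norm hp.ne').2 ⟨1, one_pos, ?_⟩
      filter_upwards [h_one_le] with j hj
      exact (one_le_rpow hj hr₀).trans (le_abs_self _)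
    refine (hconst.sub hv.isBigO).congr (fun j => by ring) fun _ => rfl
  have hinv : (fun j => (v j)⁻¹) =O[atTop] fun j : ℕ => (j : ℝ)⁻¹ := by
    refine hequiv.inv.isBigO.trans ?_
    simpa only [Pi.inv_def, mul_inv] using
      isBigO_const_mul_self p⁻¹ (fun j : ℕ => (j : ℝ)⁻¹) atTop
  have hinv' : (fun j : ℕ => (p * (j + 1))⁻¹) =O[atTop] fun j : ℕ => (j : ℝ)⁻¹ := by
    refine IsBigO.of_bound p⁻¹ ?_
    filter_upwards [h_one_le] with j hj
    rw [norm_of_nonneg (by positivity), norm_of_nonneg (by positivity), mul_inv]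
    gcongr
    linarith
  refine summable_of_isBigO_nat (summable_nat_rpow.2 (by linarith : r - 2 < -1)) ?_
  -- `v⁻¹ - (p (j+1))⁻¹ = (p (j+1) - v) · v⁻¹ · (p (j+1))⁻¹ = O(j^r · j⁻¹ · j⁻¹)`
  refine ((hnum.mul hinv).mul hinv').congr' ?_ ?_
  · filter_upwards [hv_pos] with j hj
    field_simp
  · filter_upwards [h_one_le] with j hj
    rw [rpow_sub (by linarith), rpow_two]
    field_simp

theorem stmt_15_general (p γ δ ε : ℝ) (hp : 0 < p)
    (hε : 0 < ε) (hε' : ε < 1 / 2)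
    (v : ℕ → ℝ)
    (hvp : Tendsto (fun i : ℕ => (v i - p * i) / (i : ℝ) ^ ((1 : ℝ) / 2 + ε))
      atTop (nhds 0))
    (hpos : ∀ i : ℕ, 1 ≤ i → 0 < 1 - γ / i - δ / v (i - 1)) :
    ∃ L : ℝ, 0 < L ∧
      Tendsto (fun n : ℕ =>
          (n : ℝ) ^ (-(γ + δ / p)) *
            (∏ i ∈ Finset.Icc 1 (n - 1), (1 - γ / i - δ / v (i - 1)))⁻¹)
        atTop (nhds L) := by
  have hvo : (fun i => v i - p * i) =o[atTop] fun i : ℕ => (i : ℝ) ^ ((1 : ℝ) / 2 + ε) := by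
    refine (isLittleO_iff_tendsto' ?_).2 hvp
    filter_upwards [eventually_ne_atTop 0] with i hi hzero
    exact absurd hzero (by positivity)
  have hsum : Summable fun i : ℕ => (γ / i + δ / v (i - 1)) - (γ + δ / p) / i := by
    rw [← summable_nat_add_iff 1]
    refine ((summable_inv_sub_inv_of_isLittleO hp (by positivity) (by linarith) hvo).mul_left
      δ).congr fun j => ?_
    simp only [Nat.add_sub_cancel, Nat.cast_add, Nat.cast_one]
    field_simp
    ring
  simpa only [sub_sub] using exists_pos_tendsto_rpow_neg_mul_prod_inv
    (fun i hi => by simpa only [sub_sub] using hpos i hi) hsum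

/-- The normalizing sequence `n^{-(γ+δ/p)} ∏_{i=1}^{n-1} (1 - γ/i - δ/v_{i-1})⁻¹`
converges to a positive limit, whenever `v_i = p·i + o(i^{1/2+ε})`. -/
theorem stmt_15 (p γ δ ε : ℝ) (hp : 0 < p) (hp' : p ≤ 1) (hγ : 0 < γ) (hδ : 0 < δ)
    (hε : 0 < ε) (hε' : ε < 1 / 2)
    (v : ℕ → ℝ) (hv : ∀ i, 0 < v i)
    (hvp : Tendsto (fun i : ℕ => (v i - p * i) / (i : ℝ) ^ ((1 : ℝ) / 2 + ε))
      atTop (nhds 0))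
    (hpos : ∀ i : ℕ, 1 ≤ i → 0 < 1 - γ / i - δ / v (i - 1)) :
    ∃ L : ℝ, 0 < L ∧
      Tendsto (fun n : ℕ =>
          (n : ℝ) ^ (-(γ + δ / p)) *
            (∏ i ∈ Finset.Icc 1 (n - 1), (1 - γ / i - δ / v (i - 1)))⁻¹)
        atTop (nhds L) :=
  stmt_15_general p γ δ ε hp hε hε' v hvp hpos
end

section
/- For every integer k ≥ 1 the process Z_n = b[n,k]·C(W_n + k − 1, k) − d[n,k], defined for n ≥ ℓ, is a martingale with respect to the filtration (F_n)_{n≥ℓ}. -/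
open MeasureTheory Filter Finset

/-!
Pascal's rule gives `C(W_{n+1}+k-1, k) = C(W_n+k-1, k) + 1_{jump} C(W_n+k-1, k-1)`, and
`k C(W_n+k-1, k) = W_n C(W_n+k-1, k-1)`. Together with `b[n,k] = b[n+1,k] (1 + αk/(n+1))` this
turns the increment into `Z_{n+1} - Z_n = b[n+1,k] C(W_n+k-1, k-1) (1_{jump} - P(jump | F_n))`,
whose conditional expectation vanishes once the `F_n`-measurable factor is pulled out.
Integrability is free: `W_n ≤ W_ℓ + (n - ℓ)` and `V_n ≥ 3` make every term essentially bounded.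
-/

theorem choose_succ_add_pred (w : ℕ) {k : ℕ} (hk : 1 ≤ k) :
    (w + 1 + k - 1).choose k = (w + k - 1).choose (k - 1) + (w + k - 1).choose k := by
  obtain ⟨j, rfl⟩ := Nat.exists_eq_add_of_le' hk
  rw [show w + 1 + (j + 1) - 1 = w + j + 1 by omega, show w + (j + 1) - 1 = w + j by omega,
    Nat.add_sub_cancel, Nat.choose_succ_succ']

theorem choose_add_pred_mul (w : ℕ) {k : ℕ} (hk : 1 ≤ k) :
    (w + k - 1).choose k * k = (w + k - 1).choose (k - 1) * w := by
  obtain ⟨j, rfl⟩ := Nat.exists_eq_add_of_le' hk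
  simpa [← add_assoc] using Nat.choose_succ_right_eq (w + j) j

theorem prod_Icc_inv_succ_mul {c : ℕ → ℝ} {n : ℕ} (hc : c (n + 1) ≠ 0) :
    (∏ i ∈ Icc 1 (n + 1), (c i)⁻¹) * c (n + 1) = ∏ i ∈ Icc 1 n, (c i)⁻¹ := by
  rw [prod_Icc_succ_top (by omega), mul_assoc, inv_mul_cancel₀ hc, mul_one]

theorem sum_Icc_pred_succ {M : Type*} [AddCommMonoid M] (F : ℕ → M) {ℓ n : ℕ} (hℓ : 1 ≤ ℓ)
    (hn : ℓ ≤ n) : ∑ i ∈ Icc ℓ (n + 1 - 1), F i = ∑ i ∈ Icc ℓ (n - 1), F i + F n := by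
  obtain ⟨m, rfl⟩ := Nat.exists_eq_add_of_le' (hℓ.trans hn)
  rw [Nat.add_sub_cancel, Nat.add_sub_cancel, sum_Icc_succ_top (by omega)]

theorem mul_choose_step_eq {α x b b' r d : ℝ} {w w' k : ℕ} (hk : 1 ≤ k)
    (hb : b' * (1 + α * k / x) = b) (hw : w' = w ∨ w' = w + 1) :
    b' * ((w' + k - 1).choose k : ℝ) - (d + b' * r * ((w + k - 1).choose (k - 1) : ℝ)) =
      b * ((w + k - 1).choose k : ℝ) - d + b' * ((w + k - 1).choose (k - 1) : ℝ) *
        ((if w' = w + 1 then 1 else 0) - (α * w / x + r)) := by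
  have hmul : ((w + k - 1).choose k : ℝ) * k = ((w + k - 1).choose (k - 1) : ℝ) * w := by
    exact_mod_cast choose_add_pred_mul w hk
  rw [← hb]
  rcases hw with rfl | rfl
  · rw [if_neg (by omega)]
    linear_combination (-(b' * α / x)) * hmul
  · rw [if_pos rfl, choose_succ_add_pred w hk]
    push_cast
    linear_combination (-(b' * α / x)) * hmul

section Bounded

variable {Ω : Type*} {m0 : MeasurableSpace Ω} {μ : Measure Ω}

theorem measurable_memLp_top_comp {m : MeasurableSpace Ω} (hm : m ≤ m0) {X : Ω → ℕ}
    (hX : Measurable[m] X) {N : ℕ} (hN : ∀ᵐ ω ∂μ, X ω ≤ N) (f : ℕ → ℝ) :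
    Measurable[m] (fun ω => f (X ω)) ∧ MemLp (fun ω => f (X ω)) ⊤ μ := by
  have hfX : Measurable[m] (fun ω => f (X ω)) := measurable_from_top.comp hX
  refine ⟨hfX, memLp_top_of_bound (hfX.mono hm le_rfl).aestronglyMeasurable
    (∑ i ∈ range (N + 1), ‖f i‖) (hN.mono fun _ h => ?_)⟩
  exact single_le_sum (fun i _ => norm_nonneg (f i)) (mem_range.2 (Nat.lt_succ_of_le h))

theorem measurable_memLp_top_const_div {m : MeasurableSpace Ω} (hm : m ≤ m0) {V : Ω → ℝ}
    (hV : Measurable[m] V) {a : ℝ} (ha : 0 < a) (haV : ∀ᵐ ω ∂μ, a ≤ V ω) (c : ℝ) :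
    Measurable[m] (fun ω => c / V ω) ∧ MemLp (fun ω => c / V ω) ⊤ μ := by
  have hcV : Measurable[m] (fun ω => c / V ω) := hV.const_div c
  refine ⟨hcV, memLp_top_of_bound (hcV.mono hm le_rfl).aestronglyMeasurable (|c| / a)
    (haV.mono fun ω h => ?_)⟩
  rw [norm_div, Real.norm_eq_abs, Real.norm_eq_abs, abs_of_pos (ha.trans_le h)]
  gcongr

theorem ae_le_add_sub_of_le_succ {W : ℕ → Ω → ℕ} {ℓ M : ℕ} (hM : ∀ᵐ ω ∂μ, W ℓ ω ≤ M)
    (hstep : ∀ n, ℓ ≤ n → ∀ᵐ ω ∂μ, W (n + 1) ω ≤ W n ω + 1) :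
    ∀ n, ℓ ≤ n → ∀ᵐ ω ∂μ, W n ω ≤ M + (n - ℓ) := by
  intro n hn
  induction n, hn using Nat.le_induction with
  | base => simpa using hM
  | succ n hn ih =>
    filter_upwards [ih, hstep n hn] with ω h h'
    omega

theorem measurable_memLp_top_sum_Icc {ℱ : Filtration ℕ m0} {F : ℕ → Ω → ℝ} {ℓ : ℕ}
    (hF : ∀ i, ℓ ≤ i → Measurable[ℱ i] (F i) ∧ MemLp (F i) ⊤ μ) (n : ℕ) :
    Measurable[ℱ n] (fun ω => ∑ i ∈ Icc ℓ (n - 1), F i ω) ∧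
      MemLp (fun ω => ∑ i ∈ Icc ℓ (n - 1), F i ω) ⊤ μ := by
  refine ⟨Finset.measurable_sum _ fun i hi => ?_, memLp_finsetSum _ fun i hi => ?_⟩
  · obtain ⟨hℓi, hin⟩ := mem_Icc.1 hi
    exact (hF i hℓi).1.mono (ℱ.mono (hin.trans (Nat.sub_le n 1))) le_rfl
  · exact (hF i (mem_Icc.1 hi).1).2

end Bounded

section CondExp

variable {Ω : Type*} {m m0 : MeasurableSpace Ω} {μ : Measure Ω}

theorem condExp_add_mul_sub_eq_of_condExp_eq (hm : m ≤ m0) [SigmaFinite (μ.trim hm)]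
    {X g f q : Ω → ℝ} (hX : StronglyMeasurable[m] X) (hXi : Integrable X μ)
    (hg : StronglyMeasurable[m] g) (hgfq : Integrable (g * (f - q)) μ)
    (hf : Integrable f μ) (hq : Integrable q μ) (hfq : μ[f | m] =ᵐ[μ] q) :
    μ[X + g * (f - q) | m] =ᵐ[μ] X := by
  have hq_condExp : μ[q | m] =ᵐ[μ] μ[f | m] := by
    refine (condExp_congr_ae hfq.symm).trans ?_
    rw [condExp_of_stronglyMeasurable hm stronglyMeasurable_condExp integrable_condExp]
  have hcentered : μ[f - q | m] =ᵐ[μ] 0 := by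
    filter_upwards [condExp_sub hf hq m, hq_condExp] with ω h h'
    simp [h, h']
  filter_upwards [condExp_add hXi hgfq m, condExp_mul_of_stronglyMeasurable_left hg hgfq
    (hf.sub hq), hcentered] with ω hadd hmul hzero
  simp [hadd, hmul, hzero, condExp_of_stronglyMeasurable hm hX hXi]

theorem condExp_eq_of_condExp_succ_eq {ℱ : Filtration ℕ m0} [SigmaFiniteFiltration μ ℱ]
    {X : ℕ → Ω → ℝ} {i : ℕ} (hX : StronglyMeasurable[ℱ i] (X i)) (hXi : Integrable (X i) μ)
    (hsucc : ∀ n, i ≤ n → μ[X (n + 1) | ℱ n] =ᵐ[μ] X n) {j : ℕ} (hij : i ≤ j) :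
    μ[X j | ℱ i] =ᵐ[μ] X i := by
  induction j, hij using Nat.le_induction with
  | base => rw [condExp_of_stronglyMeasurable (ℱ.le i) hX hXi]
  | succ n hin ih =>
    calc μ[X (n + 1) | ℱ i] =ᵐ[μ] μ[μ[X (n + 1) | ℱ n] | ℱ i] :=
          (condExp_condExp_of_le (ℱ.mono hin) (ℱ.le n)).symm
      _ =ᵐ[μ] μ[X n | ℱ i] := condExp_congr_ae (hsucc n hin)
      _ =ᵐ[μ] X i := ih

end CondExp

section BinomialMoment

variable {Ω : Type*} {m0 : MeasurableSpace Ω} {μ : Measure Ω} {ℱ : Filtration ℕ m0}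
  {ℓ M k n : ℕ} {α β p : ℝ} {W : ℕ → Ω → ℕ} {V : ℕ → Ω → ℝ} {b : ℕ → ℕ → ℝ}
  {d Z : ℕ → ℕ → Ω → ℝ}

theorem binomialMoment_measurable_memLp_top
    (hWadapted : ∀ n, ℓ ≤ n → Measurable[ℱ n] (W n))
    (hWle : ∀ n, ℓ ≤ n → ∀ᵐ ω ∂μ, W n ω ≤ M + (n - ℓ))
    (hVadapted : ∀ n, ℓ ≤ n → Measurable[ℱ n] (V n))
    (hV3 : ∀ n, ℓ ≤ n → ∀ᵐ ω ∂μ, 3 ≤ V n ω)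
    (hd : ∀ n k ω, d n k ω = ∑ i ∈ Icc ℓ (n - 1),
      b (i + 1) k * (β * p / V i ω) * ((W i ω + k - 1).choose (k - 1) : ℝ))
    (hZ : ∀ k n ω, Z k n ω = b n k * ((W n ω + k - 1).choose k : ℝ) - d n k ω) (hn : ℓ ≤ n) :
    Measurable[ℱ n] (Z k n) ∧ MemLp (Z k n) ⊤ μ := by
  have hchoose (i : ℕ) (hi : ℓ ≤ i) (j : ℕ) := measurable_memLp_top_comp (ℱ.le i)
    (hWadapted i hi) (hWle i hi) fun w => ((w + k - 1).choose j : ℝ)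
  have hrate (i : ℕ) (hi : ℓ ≤ i) := measurable_memLp_top_const_div (ℱ.le i) (hVadapted i hi)
    three_pos (hV3 i hi) (β * p)
  have hdrift : Measurable[ℱ n] (d n k) ∧ MemLp (d n k) ⊤ μ := by
    rw [funext (hd n k)]
    exact measurable_memLp_top_sum_Icc (fun i hi =>
      ⟨((hrate i hi).1.const_mul _).mul (hchoose i hi _).1,
        (hchoose i hi _).2.mul' ((hrate i hi).2.const_mul _)⟩) n
  rw [funext (hZ k n)]
  exact ⟨((hchoose n hn k).1.const_mul _).sub hdrift.1,
    ((hchoose n hn k).2.const_mul _).sub hdrift.2⟩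

theorem binomialMoment_succ_ae_eq (hℓ : 1 ≤ ℓ) (hα : 0 ≤ α) (hk : 1 ≤ k)
    (hb : ∀ n k, b n k = ∏ i ∈ Icc 1 n, (1 + α * k / i)⁻¹)
    (hd : ∀ n k ω, d n k ω = ∑ i ∈ Icc ℓ (n - 1),
      b (i + 1) k * (β * p / V i ω) * ((W i ω + k - 1).choose (k - 1) : ℝ))
    (hZ : ∀ k n ω, Z k n ω = b n k * ((W n ω + k - 1).choose k : ℝ) - d n k ω) (hn : ℓ ≤ n)
    (hstep : ∀ᵐ ω ∂μ, W (n + 1) ω = W n ω ∨ W (n + 1) ω = W n ω + 1) :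
    Z k (n + 1) =ᵐ[μ] Z k n +
      (fun ω => b (n + 1) k * ((W n ω + k - 1).choose (k - 1) : ℝ)) *
        ({ω | W (n + 1) ω = W n ω + 1}.indicator (fun _ => (1 : ℝ)) -
          fun ω => α * W n ω / (n + 1) + β * p / V n ω) := by
  have hb_succ : b (n + 1) k * (1 + α * k / (n + 1)) = b n k := by
    rw [hb, hb]
    exact_mod_cast prod_Icc_inv_succ_mul (c := fun i : ℕ => 1 + α * k / i) (by positivity)
  filter_upwards [hstep] with ω hω
  simp only [Pi.add_apply, Pi.mul_apply, Pi.sub_apply, Set.indicator_apply, Set.mem_ofPred_eq,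
    hZ, hd, sum_Icc_pred_succ _ hℓ hn]
  exact mul_choose_step_eq hk hb_succ hω

end BinomialMoment

theorem stmt_16_general
    {Ω : Type*} {m0 : MeasurableSpace Ω} (μ : Measure Ω) [IsProbabilityMeasure μ]
    (ℱ : Filtration ℕ m0) (ℓ : ℕ) (hℓ : 1 ≤ ℓ)
    (α β p : ℝ) (hα : 0 < α)
    (W : ℕ → Ω → ℕ) (V : ℕ → Ω → ℝ)
    (hWadapted : ∀ n, ℓ ≤ n → Measurable[ℱ n] (W n))
    (hWbdd : ∃ M : ℕ, ∀ᵐ ω ∂μ, W ℓ ω ≤ M)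
    (hVadapted : ∀ n, ℓ ≤ n → Measurable[ℱ n] (V n))
    (hV3 : ∀ n, ℓ ≤ n → ∀ᵐ ω ∂μ, 3 ≤ V n ω)
    (hstep : ∀ n, ℓ ≤ n →
      (∀ᵐ ω ∂μ, W (n + 1) ω = W n ω ∨ W (n + 1) ω = W n ω + 1))
    (hcond : ∀ n, ℓ ≤ n →
      μ[Set.indicator {ω | W (n + 1) ω = W n ω + 1} (fun _ => (1 : ℝ)) | ℱ n]
        =ᵐ[μ] fun ω => α * W n ω / (n + 1) + β * p / V n ω)
    (b : ℕ → ℕ → ℝ)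
    (hb : ∀ n k, b n k = ∏ i ∈ Finset.Icc 1 n, (1 + α * k / i)⁻¹)
    (d : ℕ → ℕ → Ω → ℝ)
    (hd : ∀ n k ω, d n k ω = ∑ i ∈ Finset.Icc ℓ (n - 1),
      b (i + 1) k * (β * p / V i ω) * ((W i ω + k - 1).choose (k - 1) : ℝ))
    (Z : ℕ → ℕ → Ω → ℝ)
    (hZ : ∀ k n ω, Z k n ω = b n k * ((W n ω + k - 1).choose k : ℝ) - d n k ω) :
    ∀ k : ℕ, 1 ≤ k →
      (∀ n, ℓ ≤ n → StronglyMeasurable[ℱ n] (Z k n) ∧ Integrable (Z k n) μ) ∧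
      (∀ m n, ℓ ≤ m → m ≤ n → μ[Z k n | ℱ m] =ᵐ[μ] Z k m) := by
  intro k hk
  obtain ⟨M, hM⟩ := hWbdd
  have hWle := ae_le_add_sub_of_le_succ hM fun n hn => (hstep n hn).mono fun ω h => by omega
  have hZ_bdd (n : ℕ) (hn : ℓ ≤ n) :=
    binomialMoment_measurable_memLp_top (k := k) hWadapted hWle hVadapted hV3 hd hZ hn
  have hsucc (n : ℕ) (hn : ℓ ≤ n) : μ[Z k (n + 1) | ℱ n] =ᵐ[μ] Z k n := by
    have hA : MeasurableSet {ω | W (n + 1) ω = W n ω + 1} := measurableSet_eq_fun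
      ((hWadapted (n + 1) (by omega)).mono (ℱ.le _) le_rfl)
      (((hWadapted n hn).mono (ℱ.le n) le_rfl).add_const 1)
    have hf : MemLp ({ω | W (n + 1) ω = W n ω + 1}.indicator fun _ => (1 : ℝ)) ⊤ μ :=
      (memLp_top_const 1).indicator hA
    have hq : MemLp (fun ω => α * W n ω / (n + 1) + β * p / V n ω) ⊤ μ :=
      (measurable_memLp_top_comp (ℱ.le n) (hWadapted n hn) (hWle n hn)
        fun w => α * w / (n + 1)).2.add
      (measurable_memLp_top_const_div (ℱ.le n) (hVadapted n hn) three_pos (hV3 n hn) _).2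
    have hg := measurable_memLp_top_comp (ℱ.le n) (hWadapted n hn) (hWle n hn)
      fun w => b (n + 1) k * ((w + k - 1).choose (k - 1) : ℝ)
    exact (condExp_congr_ae (binomialMoment_succ_ae_eq hℓ hα.le hk hb hd hZ hn (hstep n hn))).trans
      (condExp_add_mul_sub_eq_of_condExp_eq (ℱ.le n) (hZ_bdd n hn).1.stronglyMeasurable
        ((hZ_bdd n hn).2.integrable le_top) hg.1.stronglyMeasurable
        (((hf.sub hq).mul hg.2).integrable le_top) (hf.integrable le_top)
        (hq.integrable le_top) (hcond n hn))
  exact ⟨fun n hn => ⟨(hZ_bdd n hn).1.stronglyMeasurable, (hZ_bdd n hn).2.integrable le_top⟩,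
    fun i j hi hij => condExp_eq_of_condExp_succ_eq (hZ_bdd i hi).1.stronglyMeasurable
      ((hZ_bdd i hi).2.integrable le_top) (fun n hn => hsucc n (hi.trans hn)) hij⟩

/-- For every `k ≥ 1`, the process `Z_n = b[n,k]·C(W_n+k-1, k) - d[n,k]`, `n ≥ ℓ`,
is a martingale with respect to the filtration `(F_n)_{n ≥ ℓ}`: it is adapted,
integrable, and `E[Z_n | F_m] = Z_m` for `ℓ ≤ m ≤ n`. -/
theorem stmt_16
    {Ω : Type*} {m0 : MeasurableSpace Ω} (μ : Measure Ω) [IsProbabilityMeasure μ]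
    (ℱ : Filtration ℕ m0) (ℓ : ℕ) (hℓ : 1 ≤ ℓ)
    (α β p : ℝ) (hα : 0 < α) (hβ : 0 < β) (hp : 0 < p) (hp' : p ≤ 1)
    (W : ℕ → Ω → ℕ) (V : ℕ → Ω → ℝ)
    (hWadapted : ∀ n, ℓ ≤ n → Measurable[ℱ n] (W n))
    (hWpos : ∀ n, ℓ ≤ n → ∀ ω, 1 ≤ W n ω)
    (hWbdd : ∃ M : ℕ, ∀ᵐ ω ∂μ, W ℓ ω ≤ M)
    (hVadapted : ∀ n, ℓ ≤ n → Measurable[ℱ n] (V n))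
    (hV3 : ∀ n, ℓ ≤ n → ∀ᵐ ω ∂μ, 3 ≤ V n ω)
    (hstep : ∀ n, ℓ ≤ n →
      (∀ᵐ ω ∂μ, W (n + 1) ω = W n ω ∨ W (n + 1) ω = W n ω + 1))
    (hcond : ∀ n, ℓ ≤ n →
      μ[Set.indicator {ω | W (n + 1) ω = W n ω + 1} (fun _ => (1 : ℝ)) | ℱ n]
        =ᵐ[μ] fun ω => α * W n ω / (n + 1) + β * p / V n ω)
    (b : ℕ → ℕ → ℝ)
    (hb : ∀ n k, b n k = ∏ i ∈ Finset.Icc 1 n, (1 + α * k / i)⁻¹)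
    (d : ℕ → ℕ → Ω → ℝ)
    (hd : ∀ n k ω, d n k ω = ∑ i ∈ Finset.Icc ℓ (n - 1),
      b (i + 1) k * (β * p / V i ω) * ((W i ω + k - 1).choose (k - 1) : ℝ))
    (Z : ℕ → ℕ → Ω → ℝ)
    (hZ : ∀ k n ω, Z k n ω = b n k * ((W n ω + k - 1).choose k : ℝ) - d n k ω) :
    ∀ k : ℕ, 1 ≤ k →
      (∀ n, ℓ ≤ n → StronglyMeasurable[ℱ n] (Z k n) ∧ Integrable (Z k n) μ) ∧
      (∀ m n, ℓ ≤ m → m ≤ n → μ[Z k n | ℱ m] =ᵐ[μ] Z k m) :=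
  stmt_16_general μ ℱ ℓ hℓ α β p hα W V hWadapted hWbdd hVadapted hV3 hstep hcond b hb d hd Z hZ
end
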